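/- arXiv:2009.09033 — 2 statements merged into one kernel-verified Lean document; each statement's English description precedes it below -/
import Mathlib

section
/- Let C be an extended Choquet cone and let f, g ∈ Lsc(C) be such that f ◁ g. Then there exist h ∈ Lsc(C) and ε > 0 such that f + h = g and ε·g ≤ h pointwise. Moreover, if f, g ∈ Lsc_σ(C), then h may be chosen in Lsc_σ(C), and if f, g ∈ A(C), then h may be chosen in A(C). -/
open scoped ENNReal NNReal

/-- The positive real numbers, used as scalars for cones. -/
abbrev PosReal : Type := {t : ℝ // 0 < t}

/-- An extended Choquet cone: an algebraically ordered topological cone that is a lattice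
under the algebraic order, with addition distributing over `⊓` and `⊔`, whose topology is
compact, Hausdorff and locally convex. -/
class ECCone (C : Type*) extends AddCommMonoid C, Lattice C, TopologicalSpace C where
  psmul : PosReal → C → C
  psmul_add : ∀ (t : PosReal) (x y : C), psmul t (x + y) = psmul t x + psmul t y
  add_psmul : ∀ (s t : PosReal) (x : C), psmul (s + t) x = psmul s x + psmul t x
  psmul_mul : ∀ (s t : PosReal) (x : C), psmul s (psmul t x) = psmul (s * t) x
  one_psmul : ∀ x : C, psmul 1 x = x
  psmul_zero : ∀ t : PosReal, psmul t 0 = 0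
  le_iff_exists_add : ∀ x y : C, x ≤ y ↔ ∃ z, x + z = y
  add_inf_distrib : ∀ x y z : C, x + (y ⊓ z) = (x + y) ⊓ (x + z)
  add_sup_distrib : ∀ x y z : C, x + (y ⊔ z) = (x + y) ⊔ (x + z)
  continuous_add' : Continuous fun p : C × C => p.1 + p.2
  continuous_psmul : Continuous fun p : PosReal × C => psmul p.1 p.2
  compact : CompactSpace C
  t2 : T2Space C
  locally_convex : ∀ (x : C) (U : Set C), IsOpen U → x ∈ U →
    ∃ V : Set C, IsOpen V ∧ x ∈ V ∧ V ⊆ U ∧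
      ∀ y ∈ V, ∀ z ∈ V, ∀ s t : PosReal, s.1 + t.1 = 1 → psmul s y + psmul t z ∈ V

/-- The way-below relation for functions into `[0,∞]`, relative to a set `S` of functions:
`f ≪ g` iff for every increasing sequence in `S` whose pointwise supremum dominates `g`,
some term of the sequence dominates `f`. -/
def FWayBelow {α : Type*} (S : Set (α → ℝ≥0∞)) (f g : α → ℝ≥0∞) : Prop :=
  ∀ h : ℕ → α → ℝ≥0∞, (∀ n, h n ∈ S) → Monotone h → (∀ a, g a ≤ ⨆ n, h n a) → ∃ n, f ≤ h n

namespace ECCone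

variable {C : Type*} [ECCone C]

/-- `w` is an idempotent: `2w = w`. -/
def IsIdem (w : C) : Prop := w + w = w

/-- `e` is the support idempotent of `x`: the maximum of `{z : x + z = x}`. -/
def IsSuppIdem (x e : C) : Prop := x + e = x ∧ ∀ z : C, x + z = x → z ≤ e

/-- `w₁ ≫ w₂` in the lattice of idempotents with the opposite order: whenever a nonempty
downward directed family of idempotents has an infimum `≤ w₂`, some member is `≤ w₁`. -/
def IdemWayBelow (w₁ w₂ : C) : Prop :=
  ∀ D : Set C, D.Nonempty → (∀ v ∈ D, IsIdem v) → DirectedOn (· ≥ ·) D →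
    ∀ m : C, IsGLB D m → m ≤ w₂ → ∃ v ∈ D, v ≤ w₁

/-- A compact idempotent: `w ≫ w`. -/
def IsCompactIdem (w : C) : Prop := IsIdem w ∧ IdemWayBelow w w

/-- `v` is compact relative to `w`: whenever a nonempty downward directed family of
idempotents has an infimum `≤ v`, some member `u` satisfies `u ⊓ w ≤ v`. -/
def CompactRelTo (v w : C) : Prop :=
  ∀ D : Set C, D.Nonempty → (∀ u ∈ D, IsIdem u) → DirectedOn (· ≥ ·) D →
    ∀ m : C, IsGLB D m → m ≤ v → ∃ u ∈ D, u ⊓ w ≤ v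

/-- `C` has an abundance of compact idempotents: every idempotent is an infimum
of compact idempotents. -/
def HasAbundantCompactIdem (C : Type*) [ECCone C] : Prop :=
  ∀ w : C, IsIdem w → ∃ D : Set C, (∀ v ∈ D, IsCompactIdem v) ∧ IsGLB D w

/-- `C` is strongly connected: `{x : x ≤ w}` is connected for every idempotent `w`. -/
def StronglyConnected (C : Type*) [ECCone C] : Prop :=
  ∀ w : C, IsIdem w → IsConnected {x : C | x ≤ w}

/-- A linear function on a cone: additive, homogeneous, sending `0` to `0`. -/
def IsLinFun (f : C → ℝ≥0∞) : Prop :=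
  f 0 = 0 ∧ (∀ x y : C, f (x + y) = f x + f y) ∧
    ∀ (t : PosReal) (x : C), f (psmul t x) = ENNReal.ofReal t.1 * f x

/-- Membership in `Lsc(C)`: linear and lower semicontinuous. -/
def MemLsc (f : C → ℝ≥0∞) : Prop := IsLinFun f ∧ LowerSemicontinuous f

/-- Membership in `Lsc_σ(C)`: in `Lsc(C)` and `f⁻¹((a,∞])` is σ-compact for all `a < ∞`. -/
def MemLscSigma (f : C → ℝ≥0∞) : Prop :=
  MemLsc f ∧ ∀ a : ℝ≥0, IsSigmaCompact {x : C | (a : ℝ≥0∞) < f x}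

/-- Membership in `A(C)`: linear and continuous. -/
def MemA (f : C → ℝ≥0∞) : Prop := IsLinFun f ∧ Continuous f

/-- `w = supp f`, the supremum of `{x : f x = 0}`. -/
def IsSupp (f : C → ℝ≥0∞) (w : C) : Prop := IsLUB {x : C | f x = 0} w

/-- The relation `f ◁ g`: `f ≤ (1-ε)g` for some `ε > 0`, and `f` is continuous at every
point where `g` is finite. -/
def Lhd (f g : C → ℝ≥0∞) : Prop :=
  (∃ ε : ℝ, 0 < ε ∧ ∀ x, f x ≤ ENNReal.ofReal (1 - ε) * g x) ∧
    ∀ x : C, g x ≠ ⊤ → ContinuousAt f x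

end ECCone

/-!
Since `f ≤ (1 - ε) g`, the function `g - f` dominates `ε g` wherever `f` is finite, so
`h = (g - f) ⊔ ε g` agrees with `g - f` there and is `⊤` where `g` is. Linearity of `h` follows by
cancelling `f` at the points where `f` is finite. At a point where `g` is finite, `f ◁ g` makes `f`
continuous, hence `g - f` lower semicontinuous; where `g = ⊤`, the lower semicontinuous minorant
`ε g` of `h` attains the value `h = ⊤`. For `Lsc_σ`, a superlevel set of `g - f` is a
countable union of sets `{f ≤ q} ∩ {a + q < g}`, each closed in a σ-compact set.
-/

lemma IsSigmaCompact.inter_isClosed {X : Type*} [TopologicalSpace X] {s t : Set X}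
    (hs : IsSigmaCompact s) (ht : IsClosed t) : IsSigmaCompact (s ∩ t) := by
  obtain ⟨K, hK, rfl⟩ := hs
  rw [Set.iUnion_inter]
  exact isSigmaCompact_iUnion_of_isCompact _ fun n => (hK n).inter_right ht

lemma IsSigmaCompact.union {X : Type*} [TopologicalSpace X] {s t : Set X}
    (hs : IsSigmaCompact s) (ht : IsSigmaCompact t) : IsSigmaCompact (s ∪ t) := by
  rw [Set.union_eq_iUnion]
  exact isSigmaCompact_iUnion _ (by rintro (_ | _) <;> assumption)

lemma lowerSemicontinuousAt_tsub {X : Type*} [TopologicalSpace X] {f g : X → ℝ≥0∞} {x : X}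
    (hg : LowerSemicontinuousAt g x) (hf : ContinuousAt f x) :
    LowerSemicontinuousAt (fun z => g z - f z) x := by
  intro y hy
  obtain ⟨b, hyb, hbg⟩ := exists_between (lt_tsub_iff_right.mp hy)
  have hf_lt : f x < b - y := lt_tsub_iff_left.mpr hyb
  filter_upwards [hf.eventually_lt continuousAt_const hf_lt, hg b hbg] with z hfz hgz
  refine lt_tsub_iff_right.mpr (lt_of_le_of_lt ?_ hgz)
  calc y + f z ≤ y + (b - y) := by gcongr
    _ = b := add_tsub_cancel_of_le (le_self_add.trans hyb.le)

section Complement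

variable {X : Type*} {f g : X → ℝ≥0∞} {c : ℝ≥0∞}

/-- The term `c * g x` makes the value `⊤` where `g x = ⊤`, where `g x - f x` may be the junk
value `⊤ - ⊤ = 0`. -/
noncomputable def complement (f g : X → ℝ≥0∞) (c : ℝ≥0∞) (x : X) : ℝ≥0∞ :=
  (g x - f x) ⊔ c * g x

lemma mul_le_complement (x : X) : c * g x ≤ complement f g c x := le_sup_right

lemma complement_eq_top {x : X} (hc : c ≠ 0) (hx : g x = ⊤) : complement f g c x = ⊤ :=
  top_unique <| (ENNReal.mul_top hc).symm.trans_le (hx ▸ mul_le_complement x)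

lemma complement_eq_tsub {x : X} (hfg : f x + c * g x ≤ g x) (hfx : f x ≠ ⊤) :
    complement f g c x = g x - f x :=
  sup_eq_left.mpr (ENNReal.le_sub_of_add_le_left hfx hfg)

lemma add_complement {x : X} (hfg : f x + c * g x ≤ g x) : f x + complement f g c x = g x := by
  have hfg_le : f x ≤ g x := le_self_add.trans hfg
  by_cases hfx : f x = ⊤
  · rw [hfx, top_add, eq_comm, ← top_le_iff, ← hfx]
    exact hfg_le
  · rw [complement_eq_tsub hfg hfx, add_tsub_cancel_of_le hfg_le]

lemma setOf_lt_tsub_eq_iUnion (a : ℝ≥0) :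
    {x | (a : ℝ≥0∞) < g x - f x} =
      ⋃ q : ℚ, {x | f x ≤ Real.toNNReal q} ∩ {x | ((a + Real.toNNReal q : ℝ≥0) : ℝ≥0∞) < g x} := by
  ext x
  simp only [Set.mem_ofPred_eq, Set.mem_iUnion, Set.mem_inter_iff, ENNReal.coe_add]
  constructor
  · intro hx
    have hfa : f x < g x - a := by
      rw [lt_tsub_iff_left, ← lt_tsub_iff_right]
      exact hx
    obtain ⟨q, -, hfq, hqg⟩ := ENNReal.lt_iff_exists_rat_btwn.mp hfa
    exact ⟨q, hfq.le, lt_tsub_iff_left.mp hqg⟩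
  · rintro ⟨q, hfq, hqg⟩
    exact lt_tsub_iff_right.mpr ((add_le_add_right hfq _).trans_lt hqg)

variable [TopologicalSpace X]

lemma lowerSemicontinuous_complement (hg : LowerSemicontinuous g)
    (hf : ∀ x, g x ≠ ⊤ → ContinuousAt f x) (hc₀ : c ≠ 0) (hc : c ≠ ⊤) :
    LowerSemicontinuous (complement f g c) := by
  have hcg : LowerSemicontinuous fun x => c * g x :=
    (ENNReal.continuous_const_mul hc).comp_lowerSemicontinuous hg mul_right_mono
  intro x
  by_cases hx : g x = ⊤
  · intro y hy
    rw [complement_eq_top hc₀ hx, ← ENNReal.mul_top hc₀, ← hx] at hy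
    filter_upwards [hcg x y hy] with z hz using hz.trans_le (mul_le_complement z)
  · exact (lowerSemicontinuousAt_tsub (hg x) (hf x hx)).sup (hcg x)

lemma continuous_complement (hg : Continuous g) (hf : Continuous f) (hc₀ : c ≠ 0) (hc : c ≠ ⊤) :
    Continuous (complement f g c) := by
  have hcg : Continuous fun x => c * g x := (ENNReal.continuous_const_mul hc).comp hg
  refine continuous_iff_continuousAt.mpr fun x => ?_
  by_cases hx : g x = ⊤
  · have htop : Filter.Tendsto (fun z => c * g z) (nhds x) (nhds ⊤) := by
      have := hcg.continuousAt (x := x)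
      rwa [ContinuousAt, hx, ENNReal.mul_top hc₀] at this
    rw [ContinuousAt, complement_eq_top hc₀ hx]
    exact tendsto_nhds_top_mono' htop mul_le_complement
  · exact (ENNReal.Tendsto.sub hg.continuousAt hf.continuousAt (Or.inl hx)).max hcg.continuousAt

lemma isSigmaCompact_setOf_lt_complement (hg : ∀ a : ℝ≥0, IsSigmaCompact {x | (a : ℝ≥0∞) < g x})
    (hf : LowerSemicontinuous f) (hc₀ : c ≠ 0) (hc : c ≠ ⊤) (a : ℝ≥0) :
    IsSigmaCompact {x | (a : ℝ≥0∞) < complement f g c x} := by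
  have hsub : IsSigmaCompact {x | (a : ℝ≥0∞) < g x - f x} := by
    rw [setOf_lt_tsub_eq_iUnion]
    refine isSigmaCompact_iUnion _ fun q => ?_
    rw [Set.inter_comm]
    exact (hg _).inter_isClosed (hf.isClosed_preimage _)
  have hmul : {x | (a : ℝ≥0∞) < c * g x} = {x | ((a / c).toNNReal : ℝ≥0∞) < g x} := by
    ext x
    rw [Set.mem_ofPred_eq, Set.mem_ofPred_eq, ENNReal.coe_toNNReal (ENNReal.div_ne_top
      ENNReal.coe_ne_top hc₀), ENNReal.div_lt_iff (Or.inl hc₀) (Or.inl hc), mul_comm]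
  simp only [complement, lt_sup_iff, Set.ofPred_or]
  exact hsub.union (hmul ▸ hg _)

end Complement

namespace ECCone

variable {C : Type*} [ECCone C] {f g h : C → ℝ≥0∞}

lemma IsLinFun.of_add_eq (hf : IsLinFun f) (hg : IsLinFun g) (hfh : ∀ x, f x + h x = g x)
    (htop : ∀ x, f x = ⊤ → h x = ⊤) : IsLinFun h := by
  obtain ⟨hf0, hfadd, hfsmul⟩ := hf
  obtain ⟨hg0, hgadd, hgsmul⟩ := hg
  refine ⟨?_, fun x y => ?_, fun t x => ?_⟩
  · simpa [hf0, hg0] using hfh 0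
  · by_cases hxy : f (x + y) = ⊤
    · rw [htop _ hxy]
      rw [hfadd, ENNReal.add_eq_top] at hxy
      rcases hxy with hx | hy
      · simp [htop x hx]
      · simp [htop y hy]
    · refine (ENNReal.add_right_inj hxy).mp ?_
      rw [hfh, hgadd, ← hfh x, ← hfh y, hfadd]
      ring
  · have ht : ENNReal.ofReal t.1 ≠ 0 := (ENNReal.ofReal_pos.mpr t.2).ne'
    by_cases htx : f (psmul t x) = ⊤
    · rw [hfsmul, ENNReal.mul_eq_top] at htx
      have hx : f x = ⊤ := (htx.resolve_right fun ht' => ENNReal.ofReal_ne_top ht'.1).2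
      rw [htop _ (by rw [hfsmul, hx, ENNReal.mul_top ht]), htop x hx, ENNReal.mul_top ht]
    · refine (ENNReal.add_right_inj htx).mp ?_
      rw [hfh, hgsmul, ← hfh x, mul_add, hfsmul]

lemma Lhd.exists_add_mul_le (hfg : Lhd f g) :
    ∃ ε : ℝ, 0 < ε ∧ ∀ x, f x + ENNReal.ofReal ε * g x ≤ g x := by
  obtain ⟨⟨ε, hε, hf⟩, -⟩ := hfg
  refine ⟨min ε 1, lt_min hε one_pos, fun x => ?_⟩
  calc f x + ENNReal.ofReal (min ε 1) * g x
      ≤ ENNReal.ofReal (1 - min ε 1) * g x + ENNReal.ofReal (min ε 1) * g x := by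
        gcongr
        exact (hf x).trans (by gcongr; exact min_le_left ε 1)
    _ = g x := by
        rw [← add_mul, ← ENNReal.ofReal_add (by simp) (by positivity), sub_add_cancel,
          ENNReal.ofReal_one, one_mul]

end ECCone

/-- If `f ◁ g` in `Lsc(C)`, then `g = f + h` for some `h ∈ Lsc(C)` with
`h ≥ ε·g` for some `ε > 0`; moreover `h` can be chosen in `Lsc_σ(C)` (resp. `A(C)`) when
`f, g ∈ Lsc_σ(C)` (resp. `A(C)`). -/
theorem stmt_13 {C : Type*} [ECCone C] (f g : C → ℝ≥0∞)
    (hf : ECCone.MemLsc f) (hg : ECCone.MemLsc g) (hfg : ECCone.Lhd f g) :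
    (∃ h : C → ℝ≥0∞, ECCone.MemLsc h ∧ (∀ x, f x + h x = g x) ∧
      ∃ ε : ℝ, 0 < ε ∧ ∀ x, ENNReal.ofReal ε * g x ≤ h x) ∧
    (ECCone.MemLscSigma f → ECCone.MemLscSigma g →
      ∃ h : C → ℝ≥0∞, ECCone.MemLscSigma h ∧ (∀ x, f x + h x = g x) ∧
        ∃ ε : ℝ, 0 < ε ∧ ∀ x, ENNReal.ofReal ε * g x ≤ h x) ∧
    (ECCone.MemA f → ECCone.MemA g →
      ∃ h : C → ℝ≥0∞, ECCone.MemA h ∧ (∀ x, f x + h x = g x) ∧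
        ∃ ε : ℝ, 0 < ε ∧ ∀ x, ENNReal.ofReal ε * g x ≤ h x) := by
  obtain ⟨ε, hε, hfεg⟩ := hfg.exists_add_mul_le
  have hc₀ : ENNReal.ofReal ε ≠ 0 := (ENNReal.ofReal_pos.mpr hε).ne'
  have hc : ENNReal.ofReal ε ≠ ⊤ := ENNReal.ofReal_ne_top
  set h := complement f g (ENNReal.ofReal ε)
  have hfh : ∀ x, f x + h x = g x := fun x => add_complement (hfεg x)
  have hlin : ECCone.IsLinFun h := hf.1.of_add_eq hg.1 hfh fun x hx =>
    complement_eq_top hc₀ (top_unique (hx ▸ le_self_add.trans (hfεg x)))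
  have hlsc : ECCone.MemLsc h := ⟨hlin, lowerSemicontinuous_complement hg.2 hfg.2 hc₀ hc⟩
  refine ⟨⟨h, hlsc, hfh, ε, hε, mul_le_complement⟩, fun _ hgσ => ?_, fun hfA hgA => ?_⟩
  · exact ⟨h, ⟨hlsc, isSigmaCompact_setOf_lt_complement hgσ.2 hf.2 hc₀ hc⟩, hfh, ε, hε,
      mul_le_complement⟩
  · exact ⟨h, ⟨hlin, continuous_complement hgA.2 hfA.2 hc₀ hc⟩, hfh, ε, hε, mul_le_complement⟩
end

section
/- Let C be an extended Choquet cone. Let h, h', g ∈ Lsc(C) be such that h ◁ g + h' and h' ◁ h. Then supp(g + h') ≤ supp(g) and supp(g + h') is compact relative to supp(g). -/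
open scoped ENNReal NNReal

/-! The zero set of `g + h'` lies in that of `g`, whence `w₁ ≤ w₂`. For relative compactness,
let `D` be a downward directed family with infimum below `w₁`. By compactness the net
`v ⊓ w₂` (`v ∈ D`) has a lower bound `p` in its closure; then `p ≤ w₁`, so `(g + h') p = 0`,
hence `h p = 0`, and since `h ◁ g + h'` makes `h` continuous at `p`, some `y = v ⊓ w₂` has
`h y < 1`. At `y` the function `g` vanishes and `h'` is finite, and `h' ≤ c' h ≤ c' c h'` with
`c' c < 1` forces `h' y = 0`; thus `y` lies in the zero set of `g + h'`, i.e. `y ≤ w₁`. -/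

open Set Topology

section DirectedCompact

variable {α : Type*} [TopologicalSpace α] [Preorder α] [CompactSpace α] {S : Set α}

theorem DirectedOn.exists_mem_closure_upperBounds [ClosedIciTopology α]
    (hS : DirectedOn (· ≤ ·) S) (hne : S.Nonempty) : ∃ q ∈ closure S, q ∈ upperBounds S := by
  have : Nonempty S := hne.to_subtype
  obtain ⟨q, hq⟩ := IsCompact.nonempty_iInter_of_directed_nonempty_isCompact_isClosed
    (fun x : S => closure S ∩ Ici x.1)
    (fun x y => by
      obtain ⟨z, hz, hxz, hyz⟩ := hS x.1 x.2 y.1 y.2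
      exact ⟨⟨z, hz⟩, inter_subset_inter_right _ (Ici_subset_Ici.2 hxz),
        inter_subset_inter_right _ (Ici_subset_Ici.2 hyz)⟩)
    (fun x => ⟨x.1, subset_closure x.2, le_rfl⟩)
    (fun _ => (isClosed_closure.inter isClosed_Ici).isCompact)
    (fun _ => isClosed_closure.inter isClosed_Ici)
  have hq' := mem_iInter.1 hq
  exact ⟨q, (hq' (Classical.arbitrary S)).1, fun x hx => (hq' ⟨x, hx⟩).2⟩

theorem DirectedOn.exists_mem_closure_lowerBounds [ClosedIicTopology α]
    (hS : DirectedOn (· ≥ ·) S) (hne : S.Nonempty) : ∃ p ∈ closure S, p ∈ lowerBounds S :=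
  have : CompactSpace αᵒᵈ := ‹CompactSpace α›
  DirectedOn.exists_mem_closure_upperBounds (α := αᵒᵈ) hS hne

theorem IsLUB.mem_of_directedOn_of_isClosed {α : Type*} [TopologicalSpace α] [PartialOrder α]
    [CompactSpace α] [ClosedIciTopology α] {S : Set α} {w : α} (hw : IsLUB S w)
    (hS : DirectedOn (· ≤ ·) S) (hne : S.Nonempty) (hcl : IsClosed S) : w ∈ S := by
  obtain ⟨q, hqS, hq⟩ := hS.exists_mem_closure_upperBounds hne
  rw [hcl.closure_eq] at hqS
  rwa [hw.unique (IsGreatest.isLUB ⟨hqS, hq⟩)]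

end DirectedCompact

namespace ECCone

variable {C : Type*} [ECCone C]

attribute [instance] ECCone.compact ECCone.t2

instance : CanonicallyOrderedAdd C where
  exists_add_of_le {x y} hxy := by
    obtain ⟨z, hz⟩ := (le_iff_exists_add x y).1 hxy
    exact ⟨z, hz.symm⟩
  le_self_add x y := (le_iff_exists_add _ _).2 ⟨y, rfl⟩
  le_add_self x y := (le_iff_exists_add _ _).2 ⟨y, add_comm x y⟩

instance : OrderClosedTopology C where
  isClosed_le' := by
    have : {p : C × C | p.1 ≤ p.2} = range (fun q : C × C => (q.1, q.1 + q.2)) := by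
      ext ⟨x, y⟩
      simp only [mem_range, Prod.mk.injEq, le_iff_exists_add]
      exact ⟨fun ⟨z, hz⟩ => ⟨(x, z), rfl, hz⟩, fun ⟨q, hq, hz⟩ => ⟨q.2, hq ▸ hz⟩⟩
    rw [this]
    exact (isCompact_range (continuous_fst.prodMk continuous_add')).isClosed

theorem IsLinFun.monotone {f : C → ℝ≥0∞} (hf : IsLinFun f) : Monotone f := by
  intro x y hxy
  obtain ⟨z, rfl⟩ := exists_add_of_le hxy
  rw [hf.2.1]
  exact le_self_add

theorem IsLinFun.add {f g : C → ℝ≥0∞} (hf : IsLinFun f) (hg : IsLinFun g) :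
    IsLinFun fun x => f x + g x := by
  refine ⟨by simp [hf.1, hg.1], fun x y => ?_, fun t x => ?_⟩
  · simp only [hf.2.1, hg.2.1]; ring
  · simp only [hf.2.2, hg.2.2, mul_add]

theorem MemLsc.add {f g : C → ℝ≥0∞} (hf : MemLsc f) (hg : MemLsc g) :
    MemLsc fun x => f x + g x :=
  ⟨hf.1.add hg.1, hf.2.add hg.2⟩

theorem IsSupp.apply_eq_zero_of_le {f : C → ℝ≥0∞} {w x : C} (hf : MemLsc f) (hw : IsSupp f w)
    (hx : x ≤ w) : f x = 0 := by
  have hclosed : IsClosed {x : C | f x = 0} := by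
    simpa only [preimage, mem_Iic, nonpos_iff_eq_zero] using hf.2.isClosed_preimage 0
  have hdir : DirectedOn (· ≤ ·) {x : C | f x = 0} := fun x hx y hy =>
    ⟨x + y, by simp_all [hf.1.2.1], le_self_add, le_add_self⟩
  have hw0 : f w = 0 := hw.mem_of_directedOn_of_isClosed hdir ⟨0, hf.1.1⟩ hclosed
  exact le_antisymm ((hf.1.monotone hx).trans hw0.le) bot_le

theorem IsSupp.anti {f g : C → ℝ≥0∞} {v w : C} (hfg : f ≤ g) (hv : IsSupp f v) (hw : IsSupp g w) :
    w ≤ v :=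
  hw.2 fun x hx => hv.1 (le_antisymm ((hfg x).trans hx.le) bot_le)

theorem Lhd.exists_le_mul {f g : C → ℝ≥0∞} (hfg : Lhd f g) :
    ∃ c < 1, ∀ x, f x ≤ c * g x := by
  obtain ⟨⟨ε, hε, hle⟩, -⟩ := hfg
  exact ⟨_, ENNReal.ofReal_lt_one.2 (by linarith), hle⟩

theorem Lhd.apply_eq_zero_of_lhd_add {h h' g : C → ℝ≥0∞} (h1 : Lhd h fun x => g x + h' x)
    (h2 : Lhd h' h) {x : C} (hgx : g x = 0) (hhx : h x ≠ ⊤) : h' x = 0 := by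
  obtain ⟨c, hc, hle⟩ := h1.exists_le_mul
  obtain ⟨c', hc', hle'⟩ := h2.exists_le_mul
  have hfin : h' x ≠ ⊤ := ne_top_of_le_ne_top (ENNReal.mul_ne_top hc'.ne_top hhx) (hle' x)
  have hself : h' x ≤ c' * c * h' x :=
    calc h' x ≤ c' * h x := hle' x
      _ ≤ c' * (c * (g x + h' x)) := by gcongr; exact hle x
      _ = c' * c * h' x := by rw [hgx, zero_add, mul_assoc]
  have hcc' : c' * c < 1 := (mul_le_of_le_one_right' hc.le).trans_lt hc'
  by_contra hne
  exact hself.not_gt (by simpa using ENNReal.mul_lt_mul_left hne hfin hcc')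

end ECCone

theorem stmt_14_general {C : Type*} [ECCone C] (h h' g : C → ℝ≥0∞)
    (hh' : ECCone.MemLsc h') (hg : ECCone.MemLsc g)
    (h1 : ECCone.Lhd h (fun x => g x + h' x)) (h2 : ECCone.Lhd h' h)
    (w₁ w₂ : C) (hw₁ : ECCone.IsSupp (fun x => g x + h' x) w₁) (hw₂ : ECCone.IsSupp g w₂) :
    w₁ ≤ w₂ ∧ ECCone.CompactRelTo w₁ w₂ := by
  refine ⟨hw₂.anti (fun _ => le_self_add) hw₁, ?_⟩
  intro D hDne _ hDdir m hm hmw₁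
  have hdir : DirectedOn (· ≥ ·) ((· ⊓ w₂) '' D) :=
    hDdir.mono_comp fun _ _ huv => inf_le_inf_right w₂ huv
  obtain ⟨p, hp_cl, hp_lb⟩ := hdir.exists_mem_closure_lowerBounds (hDne.image _)
  have hpw₁ : p ≤ w₁ := (hm.2 fun u hu => (hp_lb ⟨u, hu, rfl⟩).trans inf_le_left).trans hmw₁
  have hp0 : g p + h' p = 0 :=
    hw₁.apply_eq_zero_of_le (f := fun x => g x + h' x) (hg.add hh') hpw₁
  obtain ⟨c, -, hle⟩ := h1.exists_le_mul
  have hhp : h p = 0 := by simpa [hp0] using hle p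
  have hnhds : h ⁻¹' Iio 1 ∈ 𝓝 p :=
    h1.2 p (by simp [hp0]) (Iio_mem_nhds (hhp ▸ zero_lt_one))
  obtain ⟨_, hv1, v, hv, rfl⟩ := mem_closure_iff_nhds.1 hp_cl _ hnhds
  have hgv : g (v ⊓ w₂) = 0 := hw₂.apply_eq_zero_of_le hg inf_le_right
  have hh'v : h' (v ⊓ w₂) = 0 :=
    h1.apply_eq_zero_of_lhd_add h2 hgv (hv1.trans ENNReal.one_lt_top).ne
  exact ⟨v, hv, hw₁.1 (show g _ + h' _ = 0 by rw [hgv, hh'v, add_zero])⟩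

/-- If `h ◁ g + h'` and `h' ◁ h` in `Lsc(C)`, then
`supp(g + h') ≤ supp(g)` and `supp(g + h')` is compact relative to `supp(g)`. -/
theorem stmt_14 {C : Type*} [ECCone C] (h h' g : C → ℝ≥0∞)
    (hh : ECCone.MemLsc h) (hh' : ECCone.MemLsc h') (hg : ECCone.MemLsc g)
    (h1 : ECCone.Lhd h (fun x => g x + h' x)) (h2 : ECCone.Lhd h' h)
    (w₁ w₂ : C) (hw₁ : ECCone.IsSupp (fun x => g x + h' x) w₁) (hw₂ : ECCone.IsSupp g w₂) :
    w₁ ≤ w₂ ∧ ECCone.CompactRelTo w₁ w₂ :=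
  stmt_14_general h h' g hh' hg h1 h2 w₁ w₂ hw₁ hw₂
end
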